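/- Let H, Ψ be positive semi-definite d×d matrices, σ ≥ 0, M ≥ 1 with tr(HΨ)+σ² > 0, and Ω := ((M+1)/M) H^{1/2} Ψ H^{1/2} + ((tr(HΨ)+σ²)/M) I_d. Then for every Γ ∈ R^{d×d}, tr[H · (Ψ − Γ H Ψ − Ψ H Γ^T + Γ H^{1/2} Ω H^{1/2} Γ^T)] ≥ tr(HΨ) − tr((H^{1/2} Ψ H^{1/2})² Ω^{−1}), with equality when H^{1/2} Γ H^{1/2} = H^{1/2} Ψ H^{1/2} Ω^{−1}. -/

import Mathlib

open Matrix
namespace Matrix.PosSemidef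
open scoped ComplexOrder
noncomputable def sqrt {n 𝕜 : Type*} [Fintype n] [DecidableEq n] [RCLike 𝕜]
    {A : Matrix n n 𝕜} (hA : A.PosSemidef) : Matrix n n 𝕜 :=
  hA.1.eigenvectorUnitary.1 * diagonal ((↑) ∘ (√·) ∘ hA.1.eigenvalues) *
  (star hA.1.eigenvectorUnitary : Matrix n n 𝕜)
end Matrix.PosSemidef

lemma sqrt_mul_self_aux {d : ℕ} {H : Matrix (Fin d) (Fin d) ℝ} (hH : H.PosSemidef) :
    hH.sqrt * hH.sqrt = H := by
  have hU : (star hH.1.eigenvectorUnitary : Matrix (Fin d) (Fin d) ℝ) * hH.1.eigenvectorUnitary.1 = 1 :=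
    Unitary.star_mul_self_of_mem hH.1.eigenvectorUnitary.2
  have hsp := hH.1.spectral_theorem
  rw [Unitary.conjStarAlgAut_apply] at hsp
  have hD : diagonal ((RCLike.ofReal : ℝ → ℝ) ∘ (√·) ∘ hH.1.eigenvalues) * diagonal ((RCLike.ofReal : ℝ → ℝ) ∘ (√·) ∘ hH.1.eigenvalues)
      = diagonal (RCLike.ofReal ∘ hH.1.eigenvalues : Fin d → ℝ) := by
    rw [diagonal_mul_diagonal]
    congr 1; funext i
    simp [Real.mul_self_sqrt (hH.eigenvalues_nonneg i)]
  conv_rhs => rw [hsp]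
  unfold Matrix.PosSemidef.sqrt
  calc _ = hH.1.eigenvectorUnitary.1 * diagonal ((RCLike.ofReal : ℝ → ℝ) ∘ (√·) ∘ hH.1.eigenvalues) *
        ((star hH.1.eigenvectorUnitary : Matrix (Fin d) (Fin d) ℝ) * hH.1.eigenvectorUnitary.1) *
        diagonal ((RCLike.ofReal : ℝ → ℝ) ∘ (√·) ∘ hH.1.eigenvalues) * (star hH.1.eigenvectorUnitary : Matrix (Fin d) (Fin d) ℝ) := by
          simp only [Matrix.mul_assoc]
    _ = _ := by rw [hU, Matrix.mul_one, Matrix.mul_assoc _ (diagonal _) (diagonal _), hD]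

lemma posSemidef_sqrt_aux {d : ℕ} {H : Matrix (Fin d) (Fin d) ℝ} (hH : H.PosSemidef) :
    hH.sqrt.PosSemidef := by
  have h := (PosSemidef.diagonal (d := ((RCLike.ofReal : ℝ → ℝ) ∘ (√·) ∘ hH.1.eigenvalues : Fin d → ℝ))
    (fun i => by simp [Real.sqrt_nonneg])).mul_mul_conjTranspose_same hH.1.eigenvectorUnitary.1
  unfold Matrix.PosSemidef.sqrt
  convert h using 2 <;> rfl


lemma psd_smul_aux {n : Type*} [Fintype n] {A : Matrix n n ℝ} (hA : A.PosSemidef) {c : ℝ}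
    (hc : 0 ≤ c) : (c • A).PosSemidef := by
  refine ⟨?_, fun x => ?_⟩
  · have h := hA.1.eq
    rw [conjTranspose_eq_transpose_of_trivial] at h
    simp [Matrix.IsHermitian, conjTranspose_smul, h]
  · exact (hA.smul hc).2 x

lemma posdef_smul_one_aux {n : Type*} [Fintype n] [DecidableEq n] {c : ℝ} (hc : 0 < c) :
    ((c • (1 : Matrix n n ℝ))).PosDef := by
  refine ⟨by simp [Matrix.IsHermitian], fun x hx => ?_⟩
  exact ((Matrix.PosDef.one).smul hc).2 hx

lemma psd_trace_nonneg_aux {n : Type*} [Fintype n] [DecidableEq n] {A : Matrix n n ℝ}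
    (hA : A.PosSemidef) : 0 ≤ A.trace := by
  rw [Matrix.trace]
  apply Finset.sum_nonneg
  intro i _
  exact hA.diag_nonneg

lemma variance_aux {d : ℕ} (S Ψ Γ Ω : Matrix (Fin d) (Fin d) ℝ)
    (hSt : Sᵀ = S) (hΨt : Ψᵀ = Ψ)
    (hΩ : Ω.PosSemidef) (hinv : Ω * Ω⁻¹ = 1) (hinv' : Ω⁻¹ * Ω = 1) (hΩit : Ω⁻¹ᵀ = Ω⁻¹) :
    ((S * S * Ψ).trace - (((S * Ψ * S) ^ 2) * Ω⁻¹).trace ≤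
      (S * S * (Ψ - Γ * (S * S) * Ψ - Ψ * (S * S) * Γᵀ + Γ * S * Ω * S * Γᵀ)).trace) ∧
    (S * Γ * S = S * Ψ * S * Ω⁻¹ →
      (S * S * (Ψ - Γ * (S * S) * Ψ - Ψ * (S * S) * Γᵀ + Γ * S * Ω * S * Γᵀ)).trace =
        (S * S * Ψ).trace - (((S * Ψ * S) ^ 2) * Ω⁻¹).trace) := by
  set X := S * Γ * S with hX
  set A := S * Ψ * S with hA
  have hAt : Aᵀ = A := by rw [hA]; simp [Matrix.transpose_mul, hSt, hΨt, Matrix.mul_assoc]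
  have hXt : Xᵀ = S * Γᵀ * S := by rw [hX]; simp [Matrix.transpose_mul, hSt, Matrix.mul_assoc]
  set Y := X - A * Ω⁻¹ with hY
  have hYt : Yᵀ = Xᵀ - Ω⁻¹ * A := by
    rw [hY]; simp [Matrix.transpose_sub, Matrix.transpose_mul, hΩit, hAt]
  have e1 : (S * S * (Γ * (S * S) * Ψ)).trace = (X * A).trace := by
    have h : S * S * (Γ * (S * S) * Ψ) = S * ((S * Γ * S) * (S * Ψ)) := by noncomm_ring
    rw [h, Matrix.trace_mul_comm]
    congr 1
    rw [hX, hA]; noncomm_ring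
  have e2 : (S * S * (Ψ * (S * S) * Γᵀ)).trace = (A * Xᵀ).trace := by
    have h : S * S * (Ψ * (S * S) * Γᵀ) = S * ((S * Ψ * S) * (S * Γᵀ)) := by noncomm_ring
    rw [h, Matrix.trace_mul_comm]
    congr 1
    rw [hA, hXt]; noncomm_ring
  have e3 : (S * S * (Γ * S * Ω * S * Γᵀ)).trace = (X * Ω * Xᵀ).trace := by
    have h : S * S * (Γ * S * Ω * S * Γᵀ) = S * ((S * Γ * S) * Ω * (S * Γᵀ)) := by noncomm_ring
    rw [h, Matrix.trace_mul_comm]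
    congr 1
    rw [hX, hXt]; noncomm_ring
  have e4 : (A * Ω⁻¹ * A).trace = (A ^ 2 * Ω⁻¹).trace := by
    rw [Matrix.trace_mul_comm]
    congr 1
    noncomm_ring
  have eY : Y * Ω * Yᵀ = X * Ω * Xᵀ - X * A - A * Xᵀ + A * Ω⁻¹ * A := by
    rw [hYt, hY]
    have h : (X - A * Ω⁻¹) * Ω * (Xᵀ - Ω⁻¹ * A)
        = X * Ω * Xᵀ - X * ((Ω * Ω⁻¹) * A) - A * ((Ω⁻¹ * Ω) * Xᵀ)
          + A * (Ω⁻¹ * (Ω * Ω⁻¹)) * A := by noncomm_ring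
    rw [h, hinv, hinv']
    noncomm_ring
  have eYtr : (Y * Ω * Yᵀ).trace
      = (X * Ω * Xᵀ).trace - (X * A).trace - (A * Xᵀ).trace + (A ^ 2 * Ω⁻¹).trace := by
    rw [eY, Matrix.trace_add, Matrix.trace_sub, Matrix.trace_sub, e4]
  have key : (S * S * (Ψ - Γ * (S * S) * Ψ - Ψ * (S * S) * Γᵀ + Γ * S * Ω * S * Γᵀ)).trace
      = (S * S * Ψ).trace - (A ^ 2 * Ω⁻¹).trace + (Y * Ω * Yᵀ).trace := by
    rw [mul_add, mul_sub, mul_sub, Matrix.trace_add, Matrix.trace_sub, Matrix.trace_sub,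
      e1, e2, e3, eYtr]
    ring
  constructor
  · have hpsd : (Y * Ω * Yᵀ).PosSemidef := by
      have h := hΩ.mul_mul_conjTranspose_same Y
      rwa [conjTranspose_eq_transpose_of_trivial] at h
    have h0 : 0 ≤ (Y * Ω * Yᵀ).trace := psd_trace_nonneg_aux hpsd
    rw [key]; linarith
  · intro hEq
    have hY0 : Y = 0 := by rw [hY, hEq, sub_self]
    rw [key, hY0]
    simp

/-- With Ω := ((M+1)/M) H^{1/2} Ψ H^{1/2} + ((tr(HΨ)+σ²)/M) I, for every Γ:
tr[H (Ψ − Γ H Ψ − Ψ H Γᵀ + Γ H^{1/2} Ω H^{1/2} Γᵀ)]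
  ≥ tr(HΨ) − tr((H^{1/2} Ψ H^{1/2})² Ω⁻¹),
with equality when H^{1/2} Γ H^{1/2} = H^{1/2} Ψ H^{1/2} Ω⁻¹. -/
theorem variance_term_lower_bound {d : ℕ} (H Ψ : Matrix (Fin d) (Fin d) ℝ)
    (hH : H.PosSemidef) (hΨ : Ψ.PosSemidef)
    (σ : ℝ) (hσ : 0 ≤ σ) (M : ℕ) (hM : 1 ≤ M)
    (htr : 0 < (H * Ψ).trace + σ ^ 2)
    (Γ : Matrix (Fin d) (Fin d) ℝ) :
    letI Ω : Matrix (Fin d) (Fin d) ℝ :=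
      (((M : ℝ) + 1) / M) • (hH.sqrt * Ψ * hH.sqrt) +
        (((H * Ψ).trace + σ ^ 2) / M) • (1 : Matrix (Fin d) (Fin d) ℝ)
    ((H * Ψ).trace - (((hH.sqrt * Ψ * hH.sqrt) ^ 2) * Ω⁻¹).trace ≤
        (H * (Ψ - Γ * H * Ψ - Ψ * H * Γᵀ + Γ * hH.sqrt * Ω * hH.sqrt * Γᵀ)).trace) ∧
    (hH.sqrt * Γ * hH.sqrt = hH.sqrt * Ψ * hH.sqrt * Ω⁻¹ →
      (H * (Ψ - Γ * H * Ψ - Ψ * H * Γᵀ + Γ * hH.sqrt * Ω * hH.sqrt * Γᵀ)).trace =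
        (H * Ψ).trace - (((hH.sqrt * Ψ * hH.sqrt) ^ 2) * Ω⁻¹).trace) := by
  have hS : hH.sqrt * hH.sqrt = H := sqrt_mul_self_aux hH
  set S := hH.sqrt with hSdef
  have hSt : Sᵀ = S := by
    have h := (posSemidef_sqrt_aux hH).isHermitian.eq
    rwa [conjTranspose_eq_transpose_of_trivial] at h
  have hΨt : Ψᵀ = Ψ := by
    have h := hΨ.isHermitian.eq
    rwa [conjTranspose_eq_transpose_of_trivial] at h
  have hApsd : (S * Ψ * S).PosSemidef := by
    have h := hΨ.mul_mul_conjTranspose_same S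
    rwa [conjTranspose_eq_transpose_of_trivial, hSt] at h
  have hAt : (S * Ψ * S)ᵀ = S * Ψ * S := by
    simp [Matrix.transpose_mul, hSt, hΨt, Matrix.mul_assoc]
  have hMpos : (0 : ℝ) < M := by exact_mod_cast Nat.lt_of_lt_of_le Nat.zero_lt_one hM
  have hc1 : (0 : ℝ) ≤ ((M : ℝ) + 1) / M := by positivity
  have hc2 : (0 : ℝ) < ((H * Ψ).trace + σ ^ 2) / M := div_pos htr hMpos
  set Ωv : Matrix (Fin d) (Fin d) ℝ :=
    (((M : ℝ) + 1) / M) • (S * Ψ * S) +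
      (((H * Ψ).trace + σ ^ 2) / M) • (1 : Matrix (Fin d) (Fin d) ℝ) with hΩv
  have hΩpd : Ωv.PosDef :=
    Matrix.PosDef.posSemidef_add (psd_smul_aux hApsd hc1) (posdef_smul_one_aux hc2)
  have hdet : IsUnit Ωv.det := isUnit_iff_ne_zero.mpr hΩpd.det_pos.ne'
  have hinv : Ωv * Ωv⁻¹ = 1 := Matrix.mul_nonsing_inv _ hdet
  have hinv' : Ωv⁻¹ * Ωv = 1 := Matrix.nonsing_inv_mul _ hdet
  have hΩt : Ωvᵀ = Ωv := by
    rw [hΩv]; simp [Matrix.transpose_add, Matrix.transpose_smul, hAt]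
  have hΩit : Ωv⁻¹ᵀ = Ωv⁻¹ := by rw [Matrix.transpose_nonsing_inv, hΩt]
  have main := variance_aux S Ψ Γ Ωv hSt hΨt hΩpd.posSemidef hinv hinv' hΩit
  rw [hS] at main
  exact main
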